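/- Let n ≥ 2, let A be an invertible n×n real matrix with factorization A = [[L̂, 0],[ℓᵀ, 1]]·[[Û, u],[0, p]] where L̂ is (n−1)×(n−1) lower unitriangular, Û is (n−1)×(n−1) invertible upper triangular, and ℓ, u ∈ ℝ^{n−1}. Fix indices i, j < n and ε ∈ ℝ, and suppose A + ε·e_i e_jᵀ admits an LU factorization (lower unitriangular times upper triangular) whose last diagonal entry (last pivot) is p_ε^{(i,j)}. If 1 + ε·((L̂Û)⁻¹)_{ji} ≠ 0, then p_ε^{(i,j)} = p + ε·(Û⁻¹u)_j·(ℓᵀL̂⁻¹)_i / (1 + ε·((L̂Û)⁻¹)_{ji}). -/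

import Mathlib

open Matrix

/-- `M` is lower triangular with all diagonal entries equal to `1`. -/
def IsLowerUnitri {k : ℕ} (M : Matrix (Fin k) (Fin k) ℝ) : Prop :=
  (∀ i, M i i = 1) ∧ ∀ i j : Fin k, i < j → M i j = 0

/-- `M` is upper triangular. -/
def IsUpperTri {k : ℕ} (M : Matrix (Fin k) (Fin k) ℝ) : Prop :=
  ∀ i j : Fin k, j < i → M i j = 0

/-- The block matrix `[[L̂, 0],[ℓᵀ, 1]] * [[Û, u],[0, p]]`, viewed as an
`(m+1) × (m+1)` matrix. -/
noncomputable def blockLU {m : ℕ} (Lhat Uhat : Matrix (Fin m) (Fin m) ℝ)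
    (l u : Fin m → ℝ) (p : ℝ) : Matrix (Fin (m + 1)) (Fin (m + 1)) ℝ :=
  Matrix.reindex finSumFinEquiv finSumFinEquiv
    (Matrix.fromBlocks Lhat 0 (Matrix.of fun (_ : Fin 1) i => l i)
        (Matrix.of fun (_ : Fin 1) (_ : Fin 1) => (1 : ℝ)) *
      Matrix.fromBlocks Uhat (Matrix.of fun i (_ : Fin 1) => u i) 0
        (Matrix.of fun (_ : Fin 1) (_ : Fin 1) => p))

theorem aux_det_add_std {k : ℕ} (N : Matrix (Fin k) (Fin k) ℝ) (i j : Fin k) (ε : ℝ) :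
    (N + Matrix.single i j ε).det = N.det + ε * N.adjugate j i := by
  have h : N + Matrix.single i j ε
      = N.updateRow i (N i + ε • (Pi.single j 1 : Fin k → ℝ)) := by
    ext a b
    by_cases ha : a = i
    · subst ha
      simp [Matrix.single, Matrix.updateRow_self, Pi.single_apply, eq_comm, mul_comm]
    · simp [Matrix.single, Matrix.updateRow_ne ha, Ne.symm ha, ha]
  rw [h, Matrix.det_updateRow_add, Matrix.det_updateRow_smul, Matrix.updateRow_eq_self,
    Matrix.adjugate_apply]

theorem aux_det_lowerUnitri {k : ℕ} {M : Matrix (Fin k) (Fin k) ℝ}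
    (h : IsLowerUnitri M) : M.det = 1 := by
  rw [Matrix.det_of_lowerTriangular M (fun a b hab => h.2 a b hab)]
  simp [h.1]

theorem aux_det_upperTri {k : ℕ} {M : Matrix (Fin k) (Fin k) ℝ}
    (h : IsUpperTri M) : M.det = ∏ a, M a a :=
  Matrix.det_of_upperTriangular (fun a b hab => h a b hab)

theorem aux_submatrix_mul {k : ℕ} (L' U' : Matrix (Fin (k+1)) (Fin (k+1)) ℝ)
    (hL' : IsLowerUnitri L') :
    (L' * U').submatrix Fin.castSucc Fin.castSucc
      = (L'.submatrix Fin.castSucc Fin.castSucc) * (U'.submatrix Fin.castSucc Fin.castSucc) := by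
  ext a b
  simp only [Matrix.submatrix_apply, Matrix.mul_apply]
  rw [Fin.sum_univ_castSucc]
  have : L' a.castSucc (Fin.last k) = 0 := hL'.2 _ _ (Fin.castSucc_lt_last a)
  simp [this]

theorem aux_last_pivot {k : ℕ} (M L' U' : Matrix (Fin (k+1)) (Fin (k+1)) ℝ)
    (hL' : IsLowerUnitri L') (hU' : IsUpperTri U') (h : M = L' * U') :
    M.det = (M.submatrix Fin.castSucc Fin.castSucc).det * U' (Fin.last k) (Fin.last k) := by
  have hsub := aux_submatrix_mul L' U' hL'
  have hLs : IsLowerUnitri (L'.submatrix Fin.castSucc Fin.castSucc) :=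
    ⟨fun a => hL'.1 _, fun a b hab => hL'.2 _ _ (by simpa using hab)⟩
  have hUs : IsUpperTri (U'.submatrix Fin.castSucc Fin.castSucc) :=
    fun a b hab => hU' _ _ (by simpa using hab)
  rw [h, Matrix.det_mul, aux_det_lowerUnitri hL', aux_det_upperTri hU', hsub,
    Matrix.det_mul, aux_det_lowerUnitri hLs, aux_det_upperTri hUs]
  simp only [Matrix.submatrix_apply, one_mul]
  rw [Fin.prod_univ_castSucc]

theorem aux_symm_castSucc {m : ℕ} (a : Fin m) :
    finSumFinEquiv.symm a.castSucc = (Sum.inl a : Fin m ⊕ Fin 1) :=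
  finSumFinEquiv_symm_apply_castAdd a

theorem aux_blockLU_sub {m : ℕ} (Lhat Uhat : Matrix (Fin m) (Fin m) ℝ)
    (l u : Fin m → ℝ) (p : ℝ) :
    (blockLU Lhat Uhat l u p).submatrix Fin.castSucc Fin.castSucc = Lhat * Uhat := by
  ext a b
  simp only [blockLU, Matrix.submatrix_apply, Matrix.reindex_apply, Matrix.fromBlocks_multiply,
    aux_symm_castSucc, Matrix.fromBlocks_apply₁₁]
  simp

theorem aux_blockLU_det {m : ℕ} (Lhat Uhat : Matrix (Fin m) (Fin m) ℝ)
    (hL : Lhat.det = 1) (l u : Fin m → ℝ) (p : ℝ) :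
    (blockLU Lhat Uhat l u p).det = Uhat.det * p := by
  rw [blockLU, Matrix.reindex_apply, Matrix.det_submatrix_equiv_self, Matrix.det_mul,
    Matrix.det_fromBlocks_zero₁₂, Matrix.det_fromBlocks_zero₂₁, hL]
  simp [Matrix.det_fin_one]

theorem aux_one_mat : (Matrix.of fun (_ : Fin 1) (_ : Fin 1) => (1 : ℝ)) = 1 := by
  ext a b
  simp [Matrix.one_apply, Subsingleton.elim a b]

theorem aux_p_inv {p : ℝ} (hp : p ≠ 0) :
    (Matrix.of fun (_ : Fin 1) (_ : Fin 1) => p)⁻¹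
      = Matrix.of fun (_ : Fin 1) (_ : Fin 1) => p⁻¹ := by
  apply Matrix.inv_eq_right_inv
  ext a b
  simp [Matrix.mul_apply, Matrix.one_apply, Subsingleton.elim a b, mul_inv_cancel₀ hp]

theorem aux_p_unit {p : ℝ} (hp : p ≠ 0) :
    IsUnit (Matrix.of fun (_ : Fin 1) (_ : Fin 1) => p) := by
  rw [Matrix.isUnit_iff_isUnit_det, Matrix.det_fin_one]
  exact (isUnit_iff_ne_zero).2 hp

theorem aux_blockLU_inv {m : ℕ} (Lhat Uhat : Matrix (Fin m) (Fin m) ℝ)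
    (hL : IsUnit Lhat.det) (hU : IsUnit Uhat.det)
    (l u : Fin m → ℝ) {p : ℝ} (hp : p ≠ 0) (i j : Fin m) :
    (blockLU Lhat Uhat l u p)⁻¹ j.castSucc i.castSucc
      = (Lhat * Uhat)⁻¹ j i + (Uhat⁻¹ *ᵥ u) j * (Matrix.vecMul l Lhat⁻¹) i * p⁻¹ := by
  have hLu : IsUnit Lhat := (Matrix.isUnit_iff_isUnit_det _).2 hL
  have hUu : IsUnit Uhat := (Matrix.isUnit_iff_isUnit_det _).2 hU
  have h1 : IsUnit (Matrix.of fun (_ : Fin 1) (_ : Fin 1) => (1 : ℝ)) := by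
    rw [aux_one_mat]; exact isUnit_one
  have hPu := aux_p_unit hp
  rw [blockLU, Matrix.reindex_apply, ← Matrix.reindex_apply, Matrix.inv_reindex,
    Matrix.mul_inv_rev]
  have hCinv := Matrix.inv_fromBlocks_zero₂₁_of_isUnit_iff Uhat
    (Matrix.of fun i (_ : Fin 1) => u i) (Matrix.of fun (_ : Fin 1) (_ : Fin 1) => p)
    (iff_of_true hUu hPu)
  have hBinv := Matrix.inv_fromBlocks_zero₁₂_of_isUnit_iff Lhat
    (Matrix.of fun (_ : Fin 1) i => l i) (Matrix.of fun (_ : Fin 1) (_ : Fin 1) => (1 : ℝ))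
    (iff_of_true hLu h1)
  rw [Matrix.reindex_apply, Matrix.submatrix_apply]
  have hcs : ∀ a : Fin m, finSumFinEquiv.symm a.castSucc = (Sum.inl a : Fin m ⊕ Fin 1) :=
    fun a => finSumFinEquiv_symm_apply_castAdd a
  rw [hcs, hcs, hCinv, hBinv, Matrix.mul_apply]
  rw [Fintype.sum_sum_type]
  simp only [Matrix.fromBlocks_apply₁₁, Matrix.fromBlocks_apply₁₂, Matrix.fromBlocks_apply₂₁,
    Fin.sum_univ_one, aux_one_mat, inv_one, one_mul, aux_p_inv hp,
    Matrix.neg_apply, Matrix.mul_apply, Fin.sum_univ_one, Matrix.of_apply, neg_mul, mul_neg,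
    neg_neg]
  rw [Matrix.mul_inv_rev]
  rw [Matrix.mul_apply]
  congr 1
  · rw [Matrix.mulVec, Matrix.vecMul]
    simp [dotProduct, Matrix.mul_apply, Finset.sum_mul, Finset.mul_sum, mul_assoc,
      mul_comm, mul_left_comm]

theorem aux_adj {k : ℕ} (N : Matrix (Fin k) (Fin k) ℝ) (hN : N.det ≠ 0) (i j : Fin k) :
    N.adjugate i j = N.det * N⁻¹ i j := by
  rw [Matrix.inv_def]
  simp [Ring.inverse_eq_inv', Matrix.smul_apply, smul_eq_mul]
  field_simp

theorem aux_std_sub {m : ℕ} (i j : Fin m) (ε : ℝ) :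
    (Matrix.single i.castSucc j.castSucc ε).submatrix Fin.castSucc Fin.castSucc
      = Matrix.single i j ε := by
  ext a b
  simp [Matrix.single, Fin.castSucc_inj]

theorem stmt_0 {m : ℕ} (hm : 1 ≤ m)
    (Lhat Uhat : Matrix (Fin m) (Fin m) ℝ)
    (hLhat : IsLowerUnitri Lhat) (hUhat : IsUpperTri Uhat) (hUdet : IsUnit Uhat.det)
    (l u : Fin m → ℝ) (p : ℝ)
    (A : Matrix (Fin (m + 1)) (Fin (m + 1)) ℝ)
    (hA : A = blockLU Lhat Uhat l u p)
    (hAdet : IsUnit A.det)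
    (i j : Fin m) (ε : ℝ)
    (L' U' : Matrix (Fin (m + 1)) (Fin (m + 1)) ℝ)
    (hL' : IsLowerUnitri L') (hU' : IsUpperTri U')
    (hfact : A + Matrix.single i.castSucc j.castSucc ε = L' * U')
    (hden : 1 + ε * (Lhat * Uhat)⁻¹ j i ≠ 0) :
    U' (Fin.last m) (Fin.last m)
      = p + ε * (Uhat⁻¹ *ᵥ u) j * (Matrix.vecMul l Lhat⁻¹) i
          / (1 + ε * (Lhat * Uhat)⁻¹ j i) := by
  have hLdet : Lhat.det = 1 := aux_det_lowerUnitri hLhat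
  have hdU : Uhat.det ≠ 0 := hUdet.ne_zero
  have hdetA : A.det = Uhat.det * p := by rw [hA]; exact aux_blockLU_det _ _ hLdet _ _ _
  have hAne : A.det ≠ 0 := hAdet.ne_zero
  have hp : p ≠ 0 := by
    intro h; apply hAne; rw [hdetA, h, mul_zero]
  have hdLU : (Lhat * Uhat).det = Uhat.det := by rw [Matrix.det_mul, hLdet, one_mul]
  have hdLUne : (Lhat * Uhat).det ≠ 0 := by rw [hdLU]; exact hdU
  set M := A + Matrix.single i.castSucc j.castSucc ε with hM
  have hpivot := aux_last_pivot M L' U' hL' hU' hfact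
  have hMsub : M.submatrix Fin.castSucc Fin.castSucc
      = Lhat * Uhat + Matrix.single i j ε := by
    have h1 := aux_blockLU_sub Lhat Uhat l u p
    have h2 := aux_std_sub i j ε
    rw [hM] at *
    ext a b
    have e1 := congrFun (congrFun h1 a) b
    have e2 := congrFun (congrFun h2 a) b
    rw [hA] at *
    simp only [Matrix.submatrix_apply, Matrix.add_apply] at e1 e2 ⊢
    rw [e1, e2]
  set q := (Lhat * Uhat)⁻¹ j i with hq
  set r := (Uhat⁻¹ *ᵥ u) j * (Matrix.vecMul l Lhat⁻¹) i with hr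
  have hMsubdet : (M.submatrix Fin.castSucc Fin.castSucc).det
      = Uhat.det * (1 + ε * q) := by
    rw [hMsub, aux_det_add_std, aux_adj _ hdLUne, hdLU]
    ring
  have hAinv : A⁻¹ j.castSucc i.castSucc = q + r * p⁻¹ := by
    rw [hA, hr, hq]
    exact aux_blockLU_inv Lhat Uhat (hLdet ▸ isUnit_one) hUdet l u hp i j
  have hMdet : M.det = Uhat.det * (p * (1 + ε * q) + ε * r) := by
    rw [hM, aux_det_add_std, aux_adj _ hAne, hAinv, hdetA]
    field_simp
    ring
  rw [hMdet, hMsubdet, mul_assoc] at hpivot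
  have hcan := mul_left_cancel₀ hdU hpivot
  have hX : U' (Fin.last m) (Fin.last m)
      = (p * (1 + ε * q) + ε * r) / (1 + ε * q) := by
    rw [eq_div_iff hden]
    linear_combination -hcan
  rw [hX, add_div, mul_div_cancel_right₀ p hden, hr]
  ring
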